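/- Let A be a symmetric 4×4 real matrix with a₁₂ = 0, a₃₄ = 0 and a₁₄ = 0. Apply four Jacobi steps under the pivot order (1,3),(2,4),(1,4),(2,3) to obtain A⁽⁴⁾. Then S²(A⁽⁴⁾) ≤ (1/2)·S²(A), where S(X)² = Σ_{i<j} x_{ij}². -/

import Mathlib

/-!
Indices are 0-based: `A i j` is the paper's `a_{i+1,j+1}`, and the pivot order
(1,3), (2,4), (1,4), (2,3) is (0,2), (1,3), (0,3), (1,2).

A Jacobi step at pivot `(i, j)` only rotates rows and columns `i` and `j`, so it lowers `S²` by
exactly the square of the annihilated pivot; hence `S²(A⁽⁴⁾)` is `S²(A)` minus the squares of the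
four pivots. With `a₁₂ = a₃₄ = a₁₄ = 0`, the first two rotations carry `a₂₃` into the later pivots
`a₁₄⁽²⁾ = -sin φ₂ sin φ₁ a₂₃` and `a₂₃⁽³⁾ = a₂₃⁽²⁾ = cos φ₂ cos φ₁ a₂₃`, which leaves
`S²(A⁽⁴⁾) = a₂₃² (1 - cos²φ₁ cos²φ₂ - sin²φ₁ sin²φ₂)`. For angles in `[-π/4, π/4]`,
`cos²φ cos²ψ + sin²φ sin²ψ = (1 + cos 2φ cos 2ψ) / 2 ≥ 1/2`.
-/

open Real Matrix

/-- The plane rotation matrix `R(i,j,φ)` of order 4. -/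
noncomputable def planeRot (i j : Fin 4) (φ : ℝ) : Matrix (Fin 4) (Fin 4) ℝ :=
  Matrix.of fun r s =>
    if r = i ∧ s = i then Real.cos φ
    else if r = i ∧ s = j then -Real.sin φ
    else if r = j ∧ s = i then Real.sin φ
    else if r = j ∧ s = j then Real.cos φ
    else if r = s then 1 else 0

/-- `φ ∈ [-π/4, π/4]` is the Jacobi rotation angle for pivot element `a` and
diagonal difference `d`, i.e. `tan 2φ = 2a/d` (equivalently
`a cos 2φ = (d/2) sin 2φ`), with the convention `φ = 0` if `a = 0`. -/
def IsJacobiAngle (a d φ : ℝ) : Prop :=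
  φ ∈ Set.Icc (-(π/4)) (π/4) ∧ (a = 0 → φ = 0) ∧
    a * Real.cos (2 * φ) = (d / 2) * Real.sin (2 * φ)

/-- One Jacobi step at pivot `(i,j)` with angle `φ`. -/
noncomputable def jacobiStep (A : Matrix (Fin 4) (Fin 4) ℝ) (i j : Fin 4) (φ : ℝ) :
    Matrix (Fin 4) (Fin 4) ℝ :=
  (planeRot i j φ)ᵀ * A * planeRot i j φ

/-- The square of the off-norm: `S(X)² = ∑_{i<j} x_{ij}²`. -/
def offSq (X : Matrix (Fin 4) (Fin 4) ℝ) : ℝ :=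
  ∑ i : Fin 4, ∑ j : Fin 4, if i < j then (X i j) ^ 2 else 0

lemma offSq_eq (X : Matrix (Fin 4) (Fin 4) ℝ) :
    offSq X = X 0 1 ^ 2 + X 0 2 ^ 2 + X 0 3 ^ 2 + X 1 2 ^ 2 + X 1 3 ^ 2 + X 2 3 ^ 2 := by
  simp only [offSq, Fin.sum_univ_four, Fin.isValue, Fin.reduceLT, lt_self_iff_false,
    ↓reduceIte]
  ring

section JacobiStep

variable {A : Matrix (Fin 4) (Fin 4) ℝ} {i j k : Fin 4} {φ : ℝ}

lemma planeRot_apply_of_ne (hki : k ≠ i) (hkj : k ≠ j) (r : Fin 4) :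
    planeRot i j φ r k = if r = k then 1 else 0 := by
  simp [planeRot, hki, hkj]

lemma planeRot_apply_fst (r : Fin 4) :
    planeRot i j φ r i = if r = i then cos φ else if r = j then sin φ else 0 := by
  by_cases hri : r = i <;> by_cases hrj : r = j <;> simp_all [planeRot]

lemma planeRot_apply_snd (hij : i ≠ j) (r : Fin 4) :
    planeRot i j φ r j = if r = i then -sin φ else if r = j then cos φ else 0 := by
  by_cases hri : r = i <;> by_cases hrj : r = j <;> simp_all [planeRot, Ne.symm hij]

lemma jacobiStep_isSymm (hA : A.IsSymm) : (jacobiStep A i j φ).IsSymm := by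
  simp [Matrix.IsSymm, jacobiStep, transpose_mul, Matrix.mul_assoc, hA.eq]

lemma jacobiStep_apply_of_ne {r s : Fin 4} (hri : r ≠ i) (hrj : r ≠ j) (hsi : s ≠ i)
    (hsj : s ≠ j) : jacobiStep A i j φ r s = A r s := by
  simp [jacobiStep, mul_apply, planeRot_apply_of_ne hri hrj, planeRot_apply_of_ne hsi hsj]

lemma jacobiStep_apply_fst (hij : i ≠ j) (hki : k ≠ i) (hkj : k ≠ j) :
    jacobiStep A i j φ i k = cos φ * A i k + sin φ * A j k := by
  simp only [jacobiStep, mul_apply, transpose_apply, planeRot_apply_of_ne hki hkj, mul_ite,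
    mul_one, mul_zero, Finset.sum_ite_eq', Finset.mem_univ, if_true]
  rw [Fintype.sum_eq_add i j hij fun p hp => by simp [planeRot_apply_fst, hp.1, hp.2]]
  simp [planeRot_apply_fst, hij.symm]

lemma jacobiStep_apply_snd (hij : i ≠ j) (hki : k ≠ i) (hkj : k ≠ j) :
    jacobiStep A i j φ j k = -sin φ * A i k + cos φ * A j k := by
  simp only [jacobiStep, mul_apply, transpose_apply, planeRot_apply_of_ne hki hkj, mul_ite,
    mul_one, mul_zero, Finset.sum_ite_eq', Finset.mem_univ, if_true]
  rw [Fintype.sum_eq_add i j hij fun p hp => by simp [planeRot_apply_snd hij, hp.1, hp.2]]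
  simp [planeRot_apply_snd hij, hij.symm]

lemma jacobiStep_apply_fst_snd (hA : A.IsSymm) (hij : i ≠ j) :
    jacobiStep A i j φ i j = cos (2 * φ) * A i j - sin (2 * φ) / 2 * (A i i - A j j) := by
  simp only [jacobiStep, mul_apply, transpose_apply]
  rw [Fintype.sum_eq_add i j hij fun p hp => by simp [planeRot_apply_snd hij, hp.1, hp.2]]
  simp only [Finset.sum_mul]
  rw [Fintype.sum_eq_add i j hij fun p hp => by simp [planeRot_apply_fst, hp.1, hp.2],
    Fintype.sum_eq_add i j hij fun p hp => by simp [planeRot_apply_fst, hp.1, hp.2]]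
  simp only [planeRot_apply_fst, planeRot_apply_snd hij, if_neg hij.symm, ↓reduceIte,
    hA.apply i j, cos_two_mul', sin_two_mul]
  ring

lemma jacobiStep_apply_fst_snd_eq_zero (hA : A.IsSymm) (hij : i ≠ j)
    (hφ : IsJacobiAngle (A i j) (A i i - A j j) φ) : jacobiStep A i j φ i j = 0 := by
  rw [jacobiStep_apply_fst_snd hA hij]
  linarith [hφ.2.2]

lemma offSq_jacobiStep (hA : A.IsSymm) (hij : i ≠ j) :
    offSq (jacobiStep A i j φ) = offSq A - A i j ^ 2 + jacobiStep A i j φ i j ^ 2 := by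
  -- Away from the pivot, the rotation only mixes the pairs `(a_ik, a_jk)`, `k ∉ {i, j}`,
  -- each of which keeps its sum of squares because `sin² φ + cos² φ = 1`.
  have hrot : (sin φ ^ 2 + cos φ ^ 2 - 1) *
      ∑ k, (if k ≠ i ∧ k ≠ j then A i k ^ 2 + A j k ^ 2 else 0) = 0 := by
    rw [sin_sq_add_cos_sq, sub_self, zero_mul]
  have h01 := hA.apply 0 1
  have h02 := hA.apply 0 2
  have h03 := hA.apply 0 3
  have h12 := hA.apply 1 2
  have h13 := hA.apply 1 3
  have h23 := hA.apply 2 3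
  fin_cases i <;> fin_cases j <;>
    simp only [Fin.zero_eta, Fin.mk_one, Fin.reduceFinMk, Fin.isValue, ne_eq,
      not_true_eq_false] at hij hrot ⊢
  all_goals
    simp only [offSq_eq, jacobiStep, planeRot, mul_apply, Fin.sum_univ_four, transpose_apply,
      of_apply] at hrot ⊢
    simp +decide only [h01, h02, h03, h12, h13, h23, if_true, if_false] at hrot ⊢
    linear_combination hrot

lemma offSq_jacobiStep_of_isJacobiAngle (hA : A.IsSymm) (hij : i ≠ j)
    (hφ : IsJacobiAngle (A i j) (A i i - A j j) φ) :
    offSq (jacobiStep A i j φ) = offSq A - A i j ^ 2 := by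
  rw [offSq_jacobiStep hA hij, jacobiStep_apply_fst_snd_eq_zero hA hij hφ]
  ring

end JacobiStep

lemma cos_two_mul_nonneg {φ : ℝ} (hφ : φ ∈ Set.Icc (-(π / 4)) (π / 4)) : 0 ≤ cos (2 * φ) :=
  cos_nonneg_of_mem_Icc ⟨by linarith [hφ.1], by linarith [hφ.2]⟩

lemma one_half_le_cos_sq_mul_cos_sq_add_sin_sq_mul_sin_sq {φ ψ : ℝ}
    (hφ : φ ∈ Set.Icc (-(π / 4)) (π / 4)) (hψ : ψ ∈ Set.Icc (-(π / 4)) (π / 4)) :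
    1 / 2 ≤ cos φ ^ 2 * cos ψ ^ 2 + sin φ ^ 2 * sin ψ ^ 2 := by
  have h : cos φ ^ 2 * cos ψ ^ 2 + sin φ ^ 2 * sin ψ ^ 2 =
      1 / 2 + cos (2 * φ) * cos (2 * ψ) / 2 := by
    rw [cos_sq φ, cos_sq ψ, sin_sq_eq_half_sub φ, sin_sq_eq_half_sub ψ]
    ring
  rw [h]
  linarith [mul_nonneg (cos_two_mul_nonneg hφ) (cos_two_mul_nonneg hψ)]

section FirstTwoSteps

variable {A : Matrix (Fin 4) (Fin 4) ℝ} (φ ψ : ℝ)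

lemma jacobiStep_jacobiStep_apply_zero_three (hA : A.IsSymm) (h01 : A 0 1 = 0)
    (h23 : A 2 3 = 0) (h03 : A 0 3 = 0) :
    jacobiStep (jacobiStep A 0 2 φ) 1 3 ψ 0 3 = -(sin ψ * sin φ * A 1 2) := by
  have hB : (jacobiStep A 0 2 φ).IsSymm := jacobiStep_isSymm hA
  have hB10 : jacobiStep A 0 2 φ 1 0 = sin φ * A 1 2 := by
    rw [hB.apply 0 1, jacobiStep_apply_fst (by decide) (by decide) (by decide), h01,
      hA.apply 1 2]
    ring
  have hB30 : jacobiStep A 0 2 φ 3 0 = 0 := by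
    rw [hB.apply 0 3, jacobiStep_apply_fst (by decide) (by decide) (by decide), h03, h23]
    ring
  rw [(jacobiStep_isSymm hB).apply 3 0, jacobiStep_apply_snd (by decide) (by decide)
    (by decide), hB10, hB30]
  ring

lemma jacobiStep_jacobiStep_apply_one_two (hA : A.IsSymm) (h01 : A 0 1 = 0)
    (h23 : A 2 3 = 0) (h03 : A 0 3 = 0) :
    jacobiStep (jacobiStep A 0 2 φ) 1 3 ψ 1 2 = cos ψ * cos φ * A 1 2 := by
  have hB : (jacobiStep A 0 2 φ).IsSymm := jacobiStep_isSymm hA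
  have hB12 : jacobiStep A 0 2 φ 1 2 = cos φ * A 1 2 := by
    rw [hB.apply 2 1, jacobiStep_apply_snd (by decide) (by decide) (by decide), h01,
      hA.apply 1 2]
    ring
  have hB32 : jacobiStep A 0 2 φ 3 2 = 0 := by
    rw [hB.apply 2 3, jacobiStep_apply_snd (by decide) (by decide) (by decide), h03, h23]
    ring
  rw [jacobiStep_apply_fst (by decide) (by decide) (by decide), hB12, hB32]
  ring

end FirstTwoSteps

theorem offnorm_halved_of_a14_zero (A : Matrix (Fin 4) (Fin 4) ℝ) (hA : A.IsSymm)
    (h12 : A 0 1 = 0) (h34 : A 2 3 = 0) (h14 : A 0 3 = 0)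
    (φ₁ φ₂ φ₃ φ₄ : ℝ)
    (A₁ A₂ A₃ A₄ : Matrix (Fin 4) (Fin 4) ℝ)
    (hφ₁ : IsJacobiAngle (A 0 2) (A 0 0 - A 2 2) φ₁)
    (hA₁ : A₁ = jacobiStep A 0 2 φ₁)
    (hφ₂ : IsJacobiAngle (A₁ 1 3) (A₁ 1 1 - A₁ 3 3) φ₂)
    (hA₂ : A₂ = jacobiStep A₁ 1 3 φ₂)
    (hφ₃ : IsJacobiAngle (A₂ 0 3) (A₂ 0 0 - A₂ 3 3) φ₃)
    (hA₃ : A₃ = jacobiStep A₂ 0 3 φ₃)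
    (hφ₄ : IsJacobiAngle (A₃ 1 2) (A₃ 1 1 - A₃ 2 2) φ₄)
    (hA₄ : A₄ = jacobiStep A₃ 1 2 φ₄) :
    offSq A₄ ≤ (1 / 2) * offSq A := by
  have hS₁ : A₁.IsSymm := hA₁ ▸ jacobiStep_isSymm hA
  have hS₂ : A₂.IsSymm := hA₂ ▸ jacobiStep_isSymm hS₁
  have hS₃ : A₃.IsSymm := hA₃ ▸ jacobiStep_isSymm hS₂
  have hoff₁ := hA₁ ▸ offSq_jacobiStep_of_isJacobiAngle hA (by decide) hφ₁
  have hoff₂ := hA₂ ▸ offSq_jacobiStep_of_isJacobiAngle hS₁ (by decide) hφ₂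
  have hoff₃ := hA₃ ▸ offSq_jacobiStep_of_isJacobiAngle hS₂ (by decide) hφ₃
  have hoff₄ := hA₄ ▸ offSq_jacobiStep_of_isJacobiAngle hS₃ (by decide) hφ₄
  have hA₁13 : A₁ 1 3 = A 1 3 := hA₁ ▸ jacobiStep_apply_of_ne (by decide) (by decide)
    (by decide) (by decide)
  have hA₂03 : A₂ 0 3 = -(sin φ₂ * sin φ₁ * A 1 2) := by
    rw [hA₂, hA₁, jacobiStep_jacobiStep_apply_zero_three φ₁ φ₂ hA h12 h34 h14]
  have hA₃12 : A₃ 1 2 = cos φ₂ * cos φ₁ * A 1 2 := by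
    rw [hA₃, jacobiStep_apply_of_ne (by decide) (by decide) (by decide) (by decide), hA₂, hA₁,
      jacobiStep_jacobiStep_apply_one_two φ₁ φ₂ hA h12 h34 h14]
  have hoffA : offSq A = A 0 2 ^ 2 + A 1 2 ^ 2 + A 1 3 ^ 2 := by
    rw [offSq_eq, h12, h34, h14]
    ring
  have hangle := one_half_le_cos_sq_mul_cos_sq_add_sin_sq_mul_sin_sq hφ₁.1 hφ₂.1
  calc offSq A₄ = A 1 2 ^ 2 * (1 - (cos φ₁ ^ 2 * cos φ₂ ^ 2 + sin φ₁ ^ 2 * sin φ₂ ^ 2)) := by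
        rw [hoff₄, hoff₃, hoff₂, hoff₁, hoffA, hA₁13, hA₂03, hA₃12]
        ring
    _ ≤ A 1 2 ^ 2 * (1 / 2) := by gcongr; linarith
    _ ≤ 1 / 2 * offSq A := by rw [hoffA]; nlinarith [sq_nonneg (A 0 2), sq_nonneg (A 1 3)]
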